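/- arXiv:1305.5353 — 3 statements merged into one kernel-verified Lean document; each statement's English description precedes it below -/
import Mathlib

section
/- Let (z_n) be a sequence in the unit disk converging to 1 non-tangentially (|1 - z_n| ≤ M(1-|z_n|) for some M and all n), and suppose (1 - z_{n+1})/(1 - z_n) → 1 as n → ∞. Then the pseudo-hyperbolic distance d(z_n, z_{n+1}) = |(z_{n+1}-z_n)/(1 - conj(z_n) z_{n+1})| tends to 0. -/
open Complex

/-!
Write `1 - z (n+1) = r n * (1 - z n)`. Then `z (n+1) - z n = (1 - z n) (1 - r n)`, while the
denominator satisfies `‖1 - conj (z n) z (n+1)‖ ≥ 1 - ‖z n‖ ≥ ‖1 - z n‖ / M` by non-tangentiality.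
Hence `d(z n, z (n+1)) ≤ M ‖1 - r n‖ → 0`.
-/

theorem one_sub_norm_le_norm_one_sub_conj_mul {z w : ℂ} (hw : ‖w‖ ≤ 1) :
    1 - ‖z‖ ≤ ‖1 - starRingEnd ℂ z * w‖ :=
  calc 1 - ‖z‖ ≤ 1 - ‖z‖ * ‖w‖ := by
        gcongr
        exact mul_le_of_le_one_right (norm_nonneg z) hw
    _ = ‖(1 : ℂ)‖ - ‖starRingEnd ℂ z * w‖ := by simp
    _ ≤ ‖1 - starRingEnd ℂ z * w‖ := norm_sub_norm_le _ _

theorem norm_pseudoHyperbolic_le_of_nontangential {z w : ℂ} {M : ℝ} (hz : ‖z‖ < 1)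
    (hw : ‖w‖ ≤ 1) (hM : ‖1 - z‖ ≤ M * (1 - ‖z‖)) :
    ‖(w - z) / (1 - starRingEnd ℂ z * w)‖ ≤ M * ‖1 - (1 - w) / (1 - z)‖ := by
  have hz₁ : 1 - z ≠ 0 := sub_ne_zero.mpr fun h => by simp [← h] at hz
  have hgap : 0 < 1 - ‖z‖ := sub_pos.mpr hz
  have hM₀ : 0 ≤ M := nonneg_of_mul_nonneg_left ((norm_nonneg _).trans hM) hgap
  have hden := one_sub_norm_le_norm_one_sub_conj_mul (z := z) hw
  have hnum : w - z = (1 - z) * (1 - (1 - w) / (1 - z)) := by field_simp; ring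
  rw [hnum, norm_div, norm_mul, div_le_iff₀ (hgap.trans_le hden)]
  calc ‖1 - z‖ * ‖1 - (1 - w) / (1 - z)‖ ≤ M * (1 - ‖z‖) * ‖1 - (1 - w) / (1 - z)‖ := by
        gcongr
    _ ≤ M * ‖1 - (1 - w) / (1 - z)‖ * ‖1 - starRingEnd ℂ z * w‖ := by
        rw [mul_right_comm]
        gcongr

theorem step_tendsto_zero_of_nontangential_general
    (z : ℕ → ℂ) (M : ℝ)
    (hz : ∀ n, z n ∈ Metric.ball (0 : ℂ) 1)
    (hM : ∀ n, ‖1 - z n‖ ≤ M * (1 - ‖z n‖))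
    (hratio : Filter.Tendsto (fun n => (1 - z (n + 1)) / (1 - z n))
      Filter.atTop (nhds 1)) :
    Filter.Tendsto
      (fun n => ‖(z (n + 1) - z n) / (1 - (starRingEnd ℂ) (z n) * z (n + 1))‖)
      Filter.atTop (nhds 0) := by
  have hnorm : ∀ n, ‖z n‖ < 1 := fun n => mem_ball_zero_iff.mp (hz n)
  have hbound : Filter.Tendsto (fun n => M * ‖1 - (1 - z (n + 1)) / (1 - z n)‖)
      Filter.atTop (nhds 0) := by
    simpa using ((tendsto_const_nhds (x := (1 : ℂ))).sub hratio).norm.const_mul M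
  exact squeeze_zero (fun n => norm_nonneg _)
    (fun n => norm_pseudoHyperbolic_le_of_nontangential (hnorm n) (hnorm (n + 1)).le (hM n))
    hbound

/-- If `z n → 1` non-tangentially in the unit disk and `(1 - z (n+1))/(1 - z n) → 1`,
then the pseudo-hyperbolic step `d(z n, z (n+1))` tends to `0`. -/
theorem step_tendsto_zero_of_nontangential
    (z : ℕ → ℂ) (M : ℝ)
    (hz : ∀ n, z n ∈ Metric.ball (0 : ℂ) 1)
    (hne : ∀ n, z n ≠ 1)
    (hlim : Filter.Tendsto z Filter.atTop (nhds 1))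
    (hM : ∀ n, ‖1 - z n‖ ≤ M * (1 - ‖z n‖))
    (hratio : Filter.Tendsto (fun n => (1 - z (n + 1)) / (1 - z n))
      Filter.atTop (nhds 1)) :
    Filter.Tendsto
      (fun n => ‖(z (n + 1) - z n) / (1 - (starRingEnd ℂ) (z n) * z (n + 1))‖)
      Filter.atTop (nhds 0) :=
  step_tendsto_zero_of_nontangential_general z M hz hM hratio
end

section
/- Let Z_n = (z_n, w_n) ∈ ℂ × ℂ^{N-1} be a sequence in the unit ball B^N of ℂ^N converging to the boundary point X = (1,0). Suppose: (a) ‖w_n‖²/(1-|z_n|²) → 0 (the sequence is special); (b) z_n → 1 non-tangentially in the unit disk, i.e., |1-z_n|/(1-|z_n|) is bounded; and (c) (1 - z_{n+1})/(1 - z_n) → 1. Then the pseudo-hyperbolic distance in the ball satisfies d_{B^N}(Z_n, Z_{n+1}) → 0. -/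
/-!
Write `a = 1 - |z|²`, `a' = 1 - |z'|²` and `S = a + a'` for points `Z = (z, w)`, `W = (z', w')`
of the ball. By Cauchy–Schwarz, `|1 - ⟨Z, W⟩| ≥ 1 - ‖Z‖‖W‖ ≥ S / 4` once `‖w‖² ≤ a / 2` and
`‖w'‖² ≤ a' / 2`. Expanding `|1 - ⟨Z, W⟩|²` around the disk identity
`|1 - z z̄'|² = a a' + |z - z'|²` bounds `|1 - ⟨Z, W⟩|² - (1 - ‖Z‖²)(1 - ‖W‖²)` by `S²` times a
quantity that is small when `|z - z'| / a`, `‖w‖² / a` and `‖w'‖² / a'` are. Along the sequence,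
`|z_n - z_{n+1}| = |1 - z_n| |(1 - z_{n+1})/(1 - z_n) - 1|` and non-tangential approach make the
first ratio `o(1)`, and speciality makes the other two `o(1)`.
-/

open Complex ComplexConjugate Filter

noncomputable section

variable {E : Type*} [NormedAddCommGroup E] [InnerProductSpace ℂ E]

/-- `⟨(z, w), (z', w')⟩` on `ℂ × E`; Mathlib's `inner` is conjugate-linear in its first slot. -/
def ballInner (z : ℂ) (w : E) (z' : ℂ) (w' : E) : ℂ := z * conj z' + inner ℂ w' w

def pseudoHypDistSq (z : ℂ) (w : E) (z' : ℂ) (w' : E) : ℝ :=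
  1 - (1 - (‖z‖ ^ 2 + ‖w‖ ^ 2)) * (1 - (‖z'‖ ^ 2 + ‖w'‖ ^ 2)) /
    ‖1 - ballInner z w z' w'‖ ^ 2

theorem Complex.norm_one_sub_mul_conj_sq (a b : ℂ) :
    ‖1 - a * conj b‖ ^ 2 = (1 - ‖a‖ ^ 2) * (1 - ‖b‖ ^ 2) + ‖a - b‖ ^ 2 := by
  simp only [Complex.sq_norm, normSq_apply, mul_re, mul_im, sub_re, sub_im, one_re, one_im,
    conj_re, conj_im]
  ring

theorem Complex.norm_one_sub_mul_conj_le {a b : ℂ} {K : ℝ} (ha : ‖a‖ ≤ 1) (hb : ‖b‖ ≤ 1)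
    (hK : ‖a - b‖ ≤ K * ((1 - ‖a‖ ^ 2) + (1 - ‖b‖ ^ 2))) :
    ‖1 - a * conj b‖ ≤ (K + 1 / 2) * ((1 - ‖a‖ ^ 2) + (1 - ‖b‖ ^ 2)) := by
  have hS : 0 ≤ (1 - ‖a‖ ^ 2) + (1 - ‖b‖ ^ 2) := by nlinarith [norm_nonneg a, norm_nonneg b]
  have hKS : 0 ≤ K * ((1 - ‖a‖ ^ 2) + (1 - ‖b‖ ^ 2)) := (norm_nonneg _).trans hK
  refine (pow_le_pow_iff_left₀ (norm_nonneg _) (by nlinarith) two_ne_zero).mp ?_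
  rw [norm_one_sub_mul_conj_sq]
  nlinarith [pow_le_pow_left₀ (norm_nonneg _) hK 2, mul_nonneg hKS hS,
    sq_nonneg (‖a‖ ^ 2 - ‖b‖ ^ 2)]

theorem norm_ballInner_le (z : ℂ) (w : E) (z' : ℂ) (w' : E) :
    ‖ballInner z w z' w'‖ ≤ ‖z‖ * ‖z'‖ + ‖w‖ * ‖w'‖ := by
  calc ‖ballInner z w z' w'‖ ≤ ‖z * conj z'‖ + ‖inner ℂ w' w‖ := norm_add_le _ _
    _ ≤ ‖z‖ * ‖z'‖ + ‖w'‖ * ‖w‖ := by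
      rw [norm_mul, norm_conj]; gcongr; exact norm_inner_le_norm _ _
    _ = ‖z‖ * ‖z'‖ + ‖w‖ * ‖w'‖ := by ring

theorem one_sub_normSq_add_le_two_mul_norm_one_sub_ballInner (z : ℂ) (w : E) (z' : ℂ)
    (w' : E) :
    (1 - (‖z‖ ^ 2 + ‖w‖ ^ 2)) + (1 - (‖z'‖ ^ 2 + ‖w'‖ ^ 2)) ≤
      2 * ‖1 - ballInner z w z' w'‖ := by
  have h1 : 1 - ‖ballInner z w z' w'‖ ≤ ‖1 - ballInner z w z' w'‖ := by
    simpa using norm_sub_norm_le (1 : ℂ) (ballInner z w z' w')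
  nlinarith [norm_ballInner_le z w z' w', sq_nonneg (‖z‖ - ‖z'‖), sq_nonneg (‖w‖ - ‖w'‖)]

theorem norm_one_sub_ballInner_sq_sub_le (z : ℂ) (w : E) (z' : ℂ) (w' : E) :
    ‖1 - ballInner z w z' w'‖ ^ 2 - (1 - (‖z‖ ^ 2 + ‖w‖ ^ 2)) * (1 - (‖z'‖ ^ 2 + ‖w'‖ ^ 2)) ≤
      ‖z - z'‖ ^ 2 + 2 * ‖1 - z * conj z'‖ * (‖w‖ * ‖w'‖) +
        (1 - ‖z‖ ^ 2) * ‖w'‖ ^ 2 + (1 - ‖z'‖ ^ 2) * ‖w‖ ^ 2 := by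
  have hD : ‖1 - ballInner z w z' w'‖ ≤ ‖1 - z * conj z'‖ + ‖w‖ * ‖w'‖ := by
    calc ‖1 - ballInner z w z' w'‖ = ‖(1 - z * conj z') - inner ℂ w' w‖ := by
          rw [ballInner, sub_add_eq_sub_sub]
      _ ≤ ‖1 - z * conj z'‖ + ‖inner ℂ w' w‖ := norm_sub_le _ _
      _ ≤ ‖1 - z * conj z'‖ + ‖w‖ * ‖w'‖ := by
          rw [mul_comm ‖w‖]; gcongr; exact norm_inner_le_norm _ _
  nlinarith [pow_le_pow_left₀ (norm_nonneg _) hD 2, norm_one_sub_mul_conj_sq z z']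

theorem pseudoHypDistSq_le {z z' : ℂ} {w w' : E} {ε ε' K : ℝ}
    (hz : ‖z‖ < 1) (hz' : ‖z'‖ < 1)
    (hw : ‖w‖ ^ 2 ≤ ε * (1 - ‖z‖ ^ 2)) (hw' : ‖w'‖ ^ 2 ≤ ε' * (1 - ‖z'‖ ^ 2))
    (hε : ε ≤ 1 / 2) (hε' : ε' ≤ 1 / 2) (hK : ‖z - z'‖ ≤ K * (1 - ‖z‖ ^ 2)) :
    pseudoHypDistSq z w z' w' ≤ 16 * (K ^ 2 + (K + 1) * (ε + ε')) := by
  have ha : 0 < 1 - ‖z‖ ^ 2 := by nlinarith [norm_nonneg z]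
  have ha' : 0 < 1 - ‖z'‖ ^ 2 := by nlinarith [norm_nonneg z']
  have hε0 : 0 ≤ ε := nonneg_of_mul_nonneg_left ((sq_nonneg _).trans hw) ha
  have hε0' : 0 ≤ ε' := nonneg_of_mul_nonneg_left ((sq_nonneg _).trans hw') ha'
  have hK0 : 0 ≤ K := nonneg_of_mul_nonneg_left ((norm_nonneg _).trans hK) ha
  set S := (1 - ‖z‖ ^ 2) + (1 - ‖z'‖ ^ 2)
  set C := K ^ 2 + (K + 1) * (ε + ε')
  have hD : S / 4 ≤ ‖1 - ballInner z w z' w'‖ := by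
    nlinarith [one_sub_normSq_add_le_two_mul_norm_one_sub_ballInner z w z' w']
  have hr : ‖z - z'‖ ≤ K * S := hK.trans (by gcongr; linarith)
  have haa' : (1 - ‖z‖ ^ 2) * (1 - ‖z'‖ ^ 2) ≤ S ^ 2 / 4 := by
    nlinarith [sq_nonneg (‖z‖ ^ 2 - ‖z'‖ ^ 2)]
  have hL : ‖1 - z * conj z'‖ ≤ (K + 1 / 2) * S := norm_one_sub_mul_conj_le hz.le hz'.le hr
  have hww' : ‖w‖ * ‖w'‖ ≤ (ε + ε') * S / 2 := by
    nlinarith [sq_nonneg (‖w‖ - ‖w'‖)]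
  have hnum : ‖1 - ballInner z w z' w'‖ ^ 2 -
      (1 - (‖z‖ ^ 2 + ‖w‖ ^ 2)) * (1 - (‖z'‖ ^ 2 + ‖w'‖ ^ 2)) ≤ S ^ 2 * C := by
    have hεS : 0 ≤ (ε + ε') * S ^ 2 := by positivity
    calc _ ≤ ‖z - z'‖ ^ 2 + 2 * ‖1 - z * conj z'‖ * (‖w‖ * ‖w'‖) +
          (1 - ‖z‖ ^ 2) * ‖w'‖ ^ 2 + (1 - ‖z'‖ ^ 2) * ‖w‖ ^ 2 :=
          norm_one_sub_ballInner_sq_sub_le z w z' w'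
      _ ≤ (K * S) ^ 2 + 2 * ((K + 1 / 2) * S) * ((ε + ε') * S / 2) +
          (1 - ‖z‖ ^ 2) * (ε' * (1 - ‖z'‖ ^ 2)) + (1 - ‖z'‖ ^ 2) * (ε * (1 - ‖z‖ ^ 2)) := by
          gcongr
      _ = (K * S) ^ 2 + 2 * ((K + 1 / 2) * S) * ((ε + ε') * S / 2) +
          (ε + ε') * ((1 - ‖z‖ ^ 2) * (1 - ‖z'‖ ^ 2)) := by ring
      _ ≤ (K * S) ^ 2 + 2 * ((K + 1 / 2) * S) * ((ε + ε') * S / 2) +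
          (ε + ε') * (S ^ 2 / 4) := by gcongr
      _ ≤ S ^ 2 * C := by linear_combination hεS / 4
  have hS0 : 0 < S := by positivity
  have hD2 : (S / 4) ^ 2 ≤ ‖1 - ballInner z w z' w'‖ ^ 2 :=
    pow_le_pow_left₀ (by positivity) hD 2
  have hDpos : 0 < ‖1 - ballInner z w z' w'‖ ^ 2 := lt_of_lt_of_le (by positivity) hD2
  calc pseudoHypDistSq z w z' w'
      = (‖1 - ballInner z w z' w'‖ ^ 2 -
          (1 - (‖z‖ ^ 2 + ‖w‖ ^ 2)) * (1 - (‖z'‖ ^ 2 + ‖w'‖ ^ 2))) /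
          ‖1 - ballInner z w z' w'‖ ^ 2 := by
        rw [pseudoHypDistSq, sub_div, div_self hDpos.ne']
    _ ≤ S ^ 2 * C / (S / 4) ^ 2 := by gcongr
    _ = 16 * C := by field_simp; norm_num

theorem norm_sub_le_of_norm_one_sub_le {z : ℂ} {M : ℝ} (hz : ‖z‖ < 1)
    (hM : ‖1 - z‖ ≤ M * (1 - ‖z‖)) (z' : ℂ) :
    ‖z - z'‖ ≤ M * ‖(1 - z') / (1 - z) - 1‖ * (1 - ‖z‖ ^ 2) := by
  have h1z : 1 - z ≠ 0 := sub_ne_zero.mpr fun h => by simp [← h] at hz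
  have hM0 : 0 ≤ M := nonneg_of_mul_nonneg_left ((norm_nonneg _).trans hM) (by linarith)
  calc ‖z - z'‖ = ‖1 - z‖ * ‖(1 - z') / (1 - z) - 1‖ := by
        rw [← norm_mul, mul_sub, mul_div_cancel₀ _ h1z]; ring_nf
    _ ≤ M * (1 - ‖z‖ ^ 2) * ‖(1 - z') / (1 - z) - 1‖ := by
        gcongr
        exact hM.trans (by gcongr; nlinarith [norm_nonneg z])
    _ = M * ‖(1 - z') / (1 - z) - 1‖ * (1 - ‖z‖ ^ 2) := by ring

end

theorem restricted_orbit_zero_step_general (m : ℕ)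
    (z : ℕ → ℂ) (w : ℕ → EuclideanSpace ℂ (Fin m)) (M : ℝ)
    (hball : ∀ n, ‖z n‖ ^ 2 + ‖w n‖ ^ 2 < 1)
    (hspecial : Filter.Tendsto
      (fun n => ‖w n‖ ^ 2 / (1 - ‖z n‖ ^ 2)) Filter.atTop (nhds 0))
    (hnontang : ∀ n, ‖1 - z n‖ ≤ M * (1 - ‖z n‖))
    (hratio : Filter.Tendsto (fun n => (1 - z (n + 1)) / (1 - z n))
      Filter.atTop (nhds 1)) :
    Filter.Tendsto
      (fun n => Real.sqrt (1 -
        ((1 - (‖z n‖ ^ 2 + ‖w n‖ ^ 2)) *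
          (1 - (‖z (n + 1)‖ ^ 2 + ‖w (n + 1)‖ ^ 2))) /
        ‖1 - (z n * (starRingEnd ℂ) (z (n + 1)) +
          (inner ℂ (w (n + 1)) (w n) : ℂ))‖ ^ 2))
      Filter.atTop (nhds 0) := by
  have hz : ∀ n, ‖z n‖ < 1 := fun n => by
    nlinarith [hball n, norm_nonneg (z n), sq_nonneg ‖w n‖]
  set ε := fun n => ‖w n‖ ^ 2 / (1 - ‖z n‖ ^ 2)
  set K := fun n => M * ‖(1 - z (n + 1)) / (1 - z n) - 1‖
  have hw : ∀ n, ‖w n‖ ^ 2 ≤ ε n * (1 - ‖z n‖ ^ 2) := fun n =>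
    (div_mul_cancel₀ _ (by nlinarith [hz n, norm_nonneg (z n)])).ge
  have hε_succ : Tendsto (fun n => ε (n + 1)) atTop (nhds 0) :=
    hspecial.comp (tendsto_add_atTop_nat 1)
  have hK : Tendsto K atTop (nhds 0) := by
    simpa using ((hratio.sub_const 1).norm).const_mul M
  have hbound : Tendsto (fun n => 16 * (K n ^ 2 + (K n + 1) * (ε n + ε (n + 1))))
      atTop (nhds 0) := by
    simpa using ((hK.pow 2).add ((hK.add_const 1).mul (hspecial.add hε_succ))).const_mul 16
  have hsmall : ∀ᶠ n in atTop, pseudoHypDistSq (z n) (w n) (z (n + 1)) (w (n + 1)) ≤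
      16 * (K n ^ 2 + (K n + 1) * (ε n + ε (n + 1))) := by
    filter_upwards [hspecial.eventually (ge_mem_nhds one_half_pos),
      hε_succ.eventually (ge_mem_nhds one_half_pos)] with n hεn hεn'
    exact pseudoHypDistSq_le (hz n) (hz (n + 1)) (hw n) (hw (n + 1)) hεn hεn'
      (norm_sub_le_of_norm_one_sub_le (hz n) (hnontang n) _)
  -- `Real.sqrt` is monotone and nonnegative, so no lower bound on `d²` is needed.
  refine squeeze_zero' (Eventually.of_forall fun n => Real.sqrt_nonneg _)
    (hsmall.mono fun n h => Real.sqrt_le_sqrt h) ?_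
  simpa only [Real.sqrt_zero] using hbound.sqrt

/-- Core of Theorem 3.8: if a sequence `Z n = (z n, w n)` in the unit ball of
`ℂ × ℂ^{N-1}` converges to `(1,0)`, is special, its first coordinates tend to `1`
non-tangentially, and `(1 - z (n+1))/(1 - z n) → 1`, then the pseudo-hyperbolic
distance in the ball between consecutive terms tends to `0`. -/
theorem restricted_orbit_zero_step (m : ℕ)
    (z : ℕ → ℂ) (w : ℕ → EuclideanSpace ℂ (Fin m)) (M : ℝ)
    (hball : ∀ n, ‖z n‖ ^ 2 + ‖w n‖ ^ 2 < 1)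
    (hne : ∀ n, z n ≠ 1)
    (hzlim : Filter.Tendsto z Filter.atTop (nhds 1))
    (hwlim : Filter.Tendsto w Filter.atTop (nhds 0))
    (hspecial : Filter.Tendsto
      (fun n => ‖w n‖ ^ 2 / (1 - ‖z n‖ ^ 2)) Filter.atTop (nhds 0))
    (hnontang : ∀ n, ‖1 - z n‖ ≤ M * (1 - ‖z n‖))
    (hratio : Filter.Tendsto (fun n => (1 - z (n + 1)) / (1 - z n))
      Filter.atTop (nhds 1)) :
    Filter.Tendsto
      (fun n => Real.sqrt (1 -
        ((1 - (‖z n‖ ^ 2 + ‖w n‖ ^ 2)) *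
          (1 - (‖z (n + 1)‖ ^ 2 + ‖w (n + 1)‖ ^ 2))) /
        ‖1 - (z n * (starRingEnd ℂ) (z (n + 1)) +
          (inner ℂ (w (n + 1)) (w n) : ℂ))‖ ^ 2))
      Filter.atTop (nhds 0) :=
  restricted_orbit_zero_step_general m z w M hball hspecial hnontang hratio
end

section
/- Let (Z_n) be a sequence in B^N converging to X ∈ ∂B^N that is special (‖Z_n - ⟨Z_n,X⟩X‖²/(1-|⟨Z_n,X⟩|²) → 0) and lies in a Koranyi region K(X,M) = {Z ∈ B^N : |1-⟨Z,X⟩|/(1-‖Z‖) < M} for some M > 1. Then the projections z_n = ⟨Z_n,X⟩ converge to 1 non-tangentially in the unit disk, i.e., |1-z_n|/(1-|z_n|) is bounded. -/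
/-! By Cauchy–Schwarz, `‖⟪X, Z⟫‖ ≤ ‖Z‖` for a unit vector `X`, so `1 - ‖Z‖ ≤ 1 - ‖⟪X, Z⟫‖`:
the Koranyi bound on `‖1 - ⟪X, Z⟫‖` is already a Stolz-angle bound for `⟪X, Z⟫`, with the
same amplitude `M`. -/

theorem norm_one_sub_inner_le_of_koranyi {𝕜 E : Type*} [RCLike 𝕜] [SeminormedAddCommGroup E]
    [InnerProductSpace 𝕜 E] {x z : E} {M : ℝ} (hx : ‖x‖ = 1) (hM : 0 ≤ M)
    (hz : ‖1 - inner 𝕜 x z‖ ≤ M * (1 - ‖z‖)) :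
    ‖1 - inner 𝕜 x z‖ ≤ M * (1 - ‖inner 𝕜 x z‖) := by
  have hproj : ‖inner 𝕜 x z‖ ≤ ‖z‖ := by
    simpa [hx] using norm_inner_le_norm (𝕜 := 𝕜) x z
  exact hz.trans (by gcongr)

theorem special_koranyi_projection_nontangential_general (N : ℕ)
    (Z : ℕ → EuclideanSpace ℂ (Fin N)) (X : EuclideanSpace ℂ (Fin N)) (M : ℝ)
    (hX : ‖X‖ = 1) (hM : 1 < M)
    (hKoranyi : ∀ n, ‖1 - (inner ℂ X (Z n) : ℂ)‖ < M * (1 - ‖Z n‖)) :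
    ∃ C : ℝ, ∀ n,
      ‖1 - (inner ℂ X (Z n) : ℂ)‖ ≤
        C * (1 - ‖(inner ℂ X (Z n) : ℂ)‖) :=
  ⟨M, fun n => norm_one_sub_inner_le_of_koranyi hX (by linarith) (hKoranyi n).le⟩

/-- If a special sequence in the unit ball of `ℂ^N` converging to a boundary point
`X` lies in a Koranyi region `K(X,M)`, then its projections `z n = ⟨Z n, X⟩`
converge to `1` non-tangentially in the unit disk. -/
theorem special_koranyi_projection_nontangential (N : ℕ)
    (Z : ℕ → EuclideanSpace ℂ (Fin N)) (X : EuclideanSpace ℂ (Fin N)) (M : ℝ)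
    (hX : ‖X‖ = 1) (hM : 1 < M)
    (hball : ∀ n, ‖Z n‖ < 1)
    (hlim : Filter.Tendsto Z Filter.atTop (nhds X))
    (hspecial : Filter.Tendsto
      (fun n => ‖Z n - (inner ℂ X (Z n) : ℂ) • X‖ ^ 2 /
        (1 - (‖(inner ℂ X (Z n) : ℂ)‖) ^ 2)) Filter.atTop (nhds 0))
    (hKoranyi : ∀ n, ‖1 - (inner ℂ X (Z n) : ℂ)‖ < M * (1 - ‖Z n‖)) :
    ∃ C : ℝ, ∀ n,
      ‖1 - (inner ℂ X (Z n) : ℂ)‖ ≤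
        C * (1 - ‖(inner ℂ X (Z n) : ℂ)‖) :=
  special_koranyi_projection_nontangential_general N Z X M hX hM hKoranyi
end
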